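/- Let n ≥ 2. For self-adjoint endomorphisms R₁, R₂, R₃ of so(n) define tri(R₁,R₂,R₃) := tr((R₁R₂ + R₂R₁ + 2·R₁#R₂)∘R₃). Then tri is symmetric in all three arguments: tri(R_{σ(1)},R_{σ(2)},R_{σ(3)}) = tri(R₁,R₂,R₃) for every permutation σ of {1,2,3}. -/

import Mathlib

/-!
Common setup: we identify ⋀²ℝⁿ with the Lie algebra `so n` of real skew-symmetric
`n × n` matrices, sending `eᵢ ∧ eⱼ` to the rotation by `π/2` in the plane spanned by
`eᵢ, eⱼ`; the inner product on `so n` is `⟪A, B⟫ = -(1/2)·tr (A * B)`, and under this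
identification `v ∧ w` corresponds to the skew-symmetric matrix `v wᵀ - w vᵀ`, while
the wedge `A ∧ B` of two endomorphisms of `ℝⁿ` acts on a skew matrix `M` by
`M ↦ (1/2)(A M Bᵀ + B M Aᵀ)` (the unique linear extension of
`v∧w ↦ (1/2)(Av ∧ Bw + Bv ∧ Aw)`).
-/

noncomputable section

namespace BW

open Matrix

abbrev Mat (n : ℕ) := Matrix (Fin n) (Fin n) ℝ

/-- `so n`: the space of real skew-symmetric `n × n` matrices (≅ ⋀²ℝⁿ). -/
def so (n : ℕ) : Submodule ℝ (Mat n) where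
  carrier := {A | Aᵀ = -A}
  add_mem' := by
    intro A B hA hB
    simp only [Set.mem_setOf_eq] at *
    rw [Matrix.transpose_add, hA, hB, neg_add]
  zero_mem' := by simp
  smul_mem' := by
    intro c A hA
    simp only [Set.mem_setOf_eq] at *
    rw [Matrix.transpose_smul, hA, smul_neg]

variable {n : ℕ}

lemma mem_so_iff {A : Mat n} : A ∈ so n ↔ Aᵀ = -A := Iff.rfl

/-- The inner product `⟨A,B⟩ = -(1/2)·tr(AB)` on `so n`. -/
def ip (A B : so n) : ℝ := -(1/2) * Matrix.trace ((A : Mat n) * (B : Mat n))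

/-- `ip` as a linear map in the second variable. -/
def ipL (A : so n) : so n →ₗ[ℝ] ℝ where
  toFun B := ip A B
  map_add' B C := by
    simp only [ip, Submodule.coe_add, Matrix.mul_add, Matrix.trace_add]; ring
  map_smul' c B := by
    simp only [ip, SetLike.val_smul, Matrix.mul_smul, Matrix.trace_smul, smul_eq_mul,
      RingHom.id_apply]; ring

/-- The Lie bracket (matrix commutator) on `so n`. -/
def brk (A B : so n) : so n :=
  ⟨(A : Mat n) * (B : Mat n) - (B : Mat n) * (A : Mat n), by
    have hA : (A : Mat n)ᵀ = -(A : Mat n) := A.2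
    have hB : (B : Mat n)ᵀ = -(B : Mat n) := B.2
    rw [mem_so_iff, Matrix.transpose_sub, Matrix.transpose_mul, Matrix.transpose_mul, hA, hB]
    noncomm_ring⟩

/-- Auxiliary linear map underlying `A ∧ B`. -/
def wedgeAux (A B : Mat n) : Mat n →ₗ[ℝ] Mat n where
  toFun M := (1/2 : ℝ) • (A * M * Bᵀ + B * M * Aᵀ)
  map_add' M N := by
    simp only [mul_add, add_mul, smul_add]
    module
  map_smul' c M := by
    simp only [mul_smul_comm, smul_mul_assoc, RingHom.id_apply]
    module

lemma wedgeAux_mem (A B : Mat n) : ∀ M ∈ so n, wedgeAux A B M ∈ so n := by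
  intro M hM
  rw [mem_so_iff] at hM ⊢
  show ((1/2 : ℝ) • (A * M * Bᵀ + B * M * Aᵀ))ᵀ = -((1/2 : ℝ) • (A * M * Bᵀ + B * M * Aᵀ))
  rw [Matrix.transpose_smul, Matrix.transpose_add, Matrix.transpose_mul, Matrix.transpose_mul,
    Matrix.transpose_mul, Matrix.transpose_mul, Matrix.transpose_transpose,
    Matrix.transpose_transpose, hM]
  simp only [Matrix.neg_mul, Matrix.mul_neg, Matrix.mul_assoc, smul_neg, neg_add, smul_add]
  abel

/-- The wedge `A ∧ B` of two endomorphisms of ℝⁿ, as an endomorphism of `so n ≅ ⋀²ℝⁿ`: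
the unique linear map with `(A ∧ B)(v ∧ w) = (1/2)(Av ∧ Bw + Bv ∧ Aw)`. -/
def wedge (A B : Mat n) : Module.End ℝ (so n) :=
  (wedgeAux A B).restrict (p := so n) (q := so n) (wedgeAux_mem A B)

/-- The index set of pairs `i < j`. -/
def pairs (n : ℕ) : Finset (Fin n × Fin n) := Finset.univ.filter fun p => p.1 < p.2

/-- The standard basis vector `eᵢ` of ℝⁿ. -/
def evec (i : Fin n) : Fin n → ℝ := fun k => if k = i then 1 else 0

/-- `v ∧ w`, as an element of `so n ≅ ⋀²ℝⁿ`. -/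
def vwedge (v w : Fin n → ℝ) : so n :=
  ⟨Matrix.of fun i j => v i * w j - w i * v j, by
    rw [mem_so_iff]
    ext i j
    simp only [Matrix.transpose_apply, Matrix.of_apply, Matrix.neg_apply]
    ring⟩

/-- The orthonormal basis vector `eᵢ ∧ eⱼ` of `so n ≅ ⋀²ℝⁿ`. -/
def bvec (i j : Fin n) : so n := vwedge (evec i) (evec j)

/-- Hamilton's sharp product `R # S`: the self-adjoint endomorphism of `so n` determined by
`⟨(R#S)h, h⟩ = (1/2)·Σ_{α,β} ⟨[R(b_α), S(b_β)], h⟩·⟨[b_α, b_β], h⟩`,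
where `(b_α)` is the orthonormal basis `(eᵢ ∧ eⱼ)_{i<j}` of `so n`. -/
def sharp (R S : Module.End ℝ (so n)) : Module.End ℝ (so n) :=
  (1/4 : ℝ) • ∑ p ∈ pairs n, ∑ q ∈ pairs n,
    ((ipL (brk (R (bvec p.1 p.2)) (S (bvec q.1 q.2)))).smulRight
        (brk (bvec p.1 p.2) (bvec q.1 q.2))
      + (ipL (brk (bvec p.1 p.2) (bvec q.1 q.2))).smulRight
        (brk (R (bvec p.1 p.2)) (S (bvec q.1 q.2))))

/-- The right-hand side `R² + R^#` of Hamilton's ODE. -/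
def Qode (R : Module.End ℝ (so n)) : Module.End ℝ (so n) := R * R + sharp R R

/-- The coordinates `R_{ijkl} = ⟨R(eᵢ∧eⱼ), e_k∧e_l⟩` of an endomorphism of `so n`. -/
def Rcoord (R : Module.End ℝ (so n)) (i j k l : Fin n) : ℝ := ip (R (bvec i j)) (bvec k l)

/-- Self-adjointness with respect to the inner product `ip`. -/
def selfAdjEnd (R : Module.End ℝ (so n)) : Prop := ∀ X Y : so n, ip (R X) Y = ip X (R Y)

/-- A curvature operator: a self-adjoint endomorphism of `so n ≅ ⋀²ℝⁿ` satisfying the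
first Bianchi identity.  (`isCurvOp` carves out `S²_B(so n)`.) -/
def isCurvOp (R : Module.End ℝ (so n)) : Prop :=
  selfAdjEnd R ∧
    ∀ i j k l : Fin n, Rcoord R i j k l + Rcoord R j k i l + Rcoord R k i j l = 0

/-- The Ricci tensor `Ric_{ij} = Σ_k R_{ikjk}` of `R`. -/
def RicM (R : Module.End ℝ (so n)) : Mat n := Matrix.of fun i j => ∑ k, Rcoord R i k j k

/-- `λ̄ = tr(Ric)/n`. -/
def lamb (R : Module.End ℝ (so n)) : ℝ := Matrix.trace (RicM R) / (n : ℝ)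

/-- The traceless Ricci tensor `Ric₀ = Ric - (tr Ric / n)·id`. -/
def Ric0 (R : Module.End ℝ (so n)) : Mat n := RicM R - lamb R • (1 : Mat n)

/-- `σ = tr(Ric₀²)/n`. -/
def sigmaR (R : Module.End ℝ (so n)) : ℝ := Matrix.trace (Ric0 R * Ric0 R) / (n : ℝ)

/-- `R_I = (λ̄/(n-1))·(id ∧ id)`, the projection of `R` onto `⟨I⟩`. -/
def RI (R : Module.End ℝ (so n)) : Module.End ℝ (so n) :=
  (lamb R / ((n : ℝ) - 1)) • wedge (1 : Mat n) (1 : Mat n)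

/-- `R_{Ric₀} = (2/(n-2))·(Ric₀ ∧ id)`, the projection of `R` onto `⟨Ric₀⟩`. -/
def RRic0 (R : Module.End ℝ (so n)) : Module.End ℝ (so n) :=
  (2 / ((n : ℝ) - 2)) • wedge (Ric0 R) (1 : Mat n)

/-- The linear map `ℓ_{a,b}(R) = R + 2(n-1)a·R_I + (n-2)b·R_{Ric₀}`. -/
def lab (a b : ℝ) (R : Module.End ℝ (so n)) : Module.End ℝ (so n) :=
  R + (2 * ((n : ℝ) - 1) * a) • RI R + (((n : ℝ) - 2) * b) • RRic0 R

/-- Positive semidefiniteness of the quadratic form of an endomorphism of `so n`. -/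
def posSemidefEnd (R : Module.End ℝ (so n)) : Prop := ∀ X : so n, 0 ≤ ip (R X) X

/-- Positive definiteness of the quadratic form of an endomorphism of `so n`. -/
def posDefEnd (R : Module.End ℝ (so n)) : Prop := ∀ X : so n, X ≠ 0 → 0 < ip (R X) X

/-- `R` is 2-nonnegative: the sum of its two smallest eigenvalues is nonnegative;
equivalently (Ky Fan), `q_R(X) + q_R(Y) ≥ 0` for all orthonormal pairs `X, Y`. -/
def twoNonneg (R : Module.End ℝ (so n)) : Prop :=
  ∀ X Y : so n, ip X X = 1 → ip Y Y = 1 → ip X Y = 0 → 0 ≤ ip (R X) X + ip (R Y) Y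

/-- The (Frobenius) norm of an endomorphism of `so n`, computed in the orthonormal
basis `(eᵢ ∧ eⱼ)_{i<j}`. -/
def endNorm (R : Module.End ℝ (so n)) : ℝ :=
  Real.sqrt (∑ p ∈ pairs n, ip (R (bvec p.1 p.2)) (R (bvec p.1 p.2)))

/-- The tangent cone `T_R C`: the closure of `{t·(S - R) : S ∈ C, t ≥ 0}`. -/
def tangCone (C : Set (Module.End ℝ (so n))) (R : Module.End ℝ (so n)) :
    Set (Module.End ℝ (so n)) :=
  {X | ∀ ε > 0, ∃ S ∈ C, ∃ t : ℝ, 0 ≤ t ∧ endNorm (X - t • (S - R)) < ε}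

/-- `C` is a closed subset of the space of endomorphisms of `so n`. -/
def isClosedSet (C : Set (Module.End ℝ (so n))) : Prop :=
  ∀ X, (∀ ε > 0, ∃ Y ∈ C, endNorm (X - Y) < ε) → X ∈ C

/-- The interior of `C` relative to the subspace `S²_B(so n)` of curvature operators. -/
def interiorCurv (C : Set (Module.End ℝ (so n))) : Set (Module.End ℝ (so n)) :=
  {X | isCurvOp X ∧ ∃ ε > 0, ∀ Y, isCurvOp Y → endNorm (Y - X) < ε → Y ∈ C}

/-- Auxiliary linear map `M ↦ g M gᵀ` on matrices. -/
def conjAux (g : Mat n) : Mat n →ₗ[ℝ] Mat n where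
  toFun M := g * M * gᵀ
  map_add' M N := by simp only [mul_add, add_mul]
  map_smul' c M := by simp only [mul_smul_comm, smul_mul_assoc, RingHom.id_apply]

/-- `⋀²g` : the action `M ↦ g M gᵀ` of `g` on `so n ≅ ⋀²ℝⁿ` (for `g` orthogonal this is
the second exterior power of `g`). -/
def conjSo (g : Mat n) : Module.End ℝ (so n) :=
  (conjAux g).restrict (p := so n) (q := so n) (fun M hM => by
    rw [mem_so_iff] at hM ⊢
    show (g * M * gᵀ)ᵀ = -(g * M * gᵀ)
    rw [Matrix.transpose_mul, Matrix.transpose_mul, Matrix.transpose_transpose, hM]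
    simp only [Matrix.neg_mul, Matrix.mul_neg, Matrix.mul_assoc])

/-- The action `g · R = (⋀²g) ∘ R ∘ (⋀²g)⁻¹` of an orthogonal matrix `g`
(whose inverse is `gᵀ`) on endomorphisms of `so n`. -/
def onAct (g : Mat n) (R : Module.End ℝ (so n)) : Module.End ℝ (so n) :=
  conjSo g * R * conjSo gᵀ

/-- Two sets are at Hausdorff distance at most `ε` from each other. -/
def hdClose (A B : Set (Module.End ℝ (so n))) (ε : ℝ) : Prop :=
  (∀ X ∈ A, ∃ Y ∈ B, endNorm (X - Y) ≤ ε) ∧ ∀ Y ∈ B, ∃ X ∈ A, endNorm (X - Y) ≤ ε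

/-- The truncation `C ∩ {‖R‖ ≤ 1}`. -/
def truncSet (C : Set (Module.End ℝ (so n))) : Set (Module.End ℝ (so n)) :=
  {R ∈ C | endNorm R ≤ 1}


/-- The trilinear form `tri(R₁,R₂,R₃) = tr((R₁R₂ + R₂R₁ + 2·R₁#R₂) ∘ R₃)`. -/
def tri (R1 R2 R3 : Module.End ℝ (so n)) : ℝ :=
  LinearMap.trace ℝ ↥(so n) ((R1 * R2 + R2 * R1 + (2 : ℝ) • sharp R1 R2) * R3)


/-!
Expanding the definition, `tri R S T = tr (R S T) + tr (S R T) + Φ(R, S, T)` with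
`Φ(R, S, T) = Σ_{α,β} ⟨[R b_α, S b_β], T [b_α, b_β]⟩ = 2 tr ((R # S) T)`, as soon as `T` is
self-adjoint. The trace part is invariant under all permutations by cyclicity of the trace.
`Φ` is symmetric in its first two arguments by antisymmetry of the bracket. For the last two,
expand `T [b_α, b_β]` in the orthonormal basis: the ad-invariance `⟨[X, Y], Z⟩ = -⟨[X, Z], Y⟩`
of the inner product, applied twice, turns the resulting sum into the one with `S` and `T`
exchanged. A function of three variables symmetric under the transpositions `(12)` and `(23)`
is symmetric under all of `S₃`.
-/

lemma coe_brk (X Y : so n) : (brk X Y : Mat n) = X * Y - Y * X := rfl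

lemma ip_comm (X Y : so n) : ip X Y = ip Y X := by
  rw [ip, ip, Matrix.trace_mul_comm]

lemma ip_neg_neg (X Y : so n) : ip (-X) (-Y) = ip X Y := by
  simp [ip]

lemma ip_brk_eq_neg_ip_brk (X Y Z : so n) : ip (brk X Y) Z = -ip (brk X Z) Y := by
  simp only [ip, coe_brk, Matrix.sub_mul, Matrix.trace_sub]
  rw [Matrix.trace_mul_cycle (X : Mat n) (Y : Mat n) (Z : Mat n),
    Matrix.trace_mul_cycle (X : Mat n) (Z : Mat n) (Y : Mat n)]
  ring

lemma brk_comm (X Y : so n) : brk X Y = -brk Y X :=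
  Subtype.ext <| by simp [coe_brk]

lemma so_apply_swap (X : so n) (i j : Fin n) : (X : Mat n) j i = -(X : Mat n) i j := by
  simpa using congrFun (congrFun X.2 i) j

lemma ip_bvec (X : so n) (i j : Fin n) : ip X (bvec i j) = (X : Mat n) i j := by
  simp only [ip, one_div, trace, bvec, vwedge, evec, mul_ite, mul_one, mul_zero, diag_apply,
    Matrix.mul_apply, of_apply, mul_sub, Finset.sum_sub_distrib, Finset.sum_ite_irrel,
    Finset.sum_ite_eq', Finset.mem_univ, ↓reduceIte, Finset.sum_const_zero, so_apply_swap X i j,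
    mul_neg, neg_mul, neg_neg, sub_neg_eq_add]
  ring

lemma bvec_apply (i j k l : Fin n) :
    (bvec i j : Mat n) k l =
      (if (k, l) = (i, j) then 1 else 0) - if (l, k) = (i, j) then 1 else 0 := by
  simp only [bvec, vwedge, evec, Matrix.of_apply, ite_zero_mul_ite_zero, mul_one, Prod.mk.injEq,
    and_comm]

lemma sum_ip_bvec_smul (X : so n) : ∑ p ∈ pairs n, ip X (bvec p.1 p.2) • bvec p.1 p.2 = X := by
  ext k l
  simp only [ip_bvec, AddSubmonoidClass.coe_finsetSum, SetLike.val_smul, Matrix.sum_apply,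
    Matrix.smul_apply, bvec_apply, smul_eq_mul, mul_sub, mul_ite, mul_one, mul_zero,
    Finset.sum_sub_distrib, Finset.sum_ite_eq, pairs, Finset.mem_filter, Finset.mem_univ,
    true_and, so_apply_swap X k l]
  rcases lt_trichotomy k l with h | rfl | h
  · simp [h, h.not_gt]
  · simp only [lt_self_iff_false, ↓reduceIte, sub_self]
    linarith [so_apply_swap X k k]
  · simp [h, h.not_gt]

lemma apply_eq_sum_ip_bvec_mul (φ : so n →ₗ[ℝ] ℝ) (Z : so n) :
    φ Z = ∑ p ∈ pairs n, ip Z (bvec p.1 p.2) * φ (bvec p.1 p.2) := by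
  conv_lhs => rw [← sum_ip_bvec_smul Z]
  simp only [map_sum, map_smul, smul_eq_mul]

lemma sum_ip_brk_apply_brk_comm (X Y : so n) (S T : Module.End ℝ (so n)) :
    ∑ q ∈ pairs n, ip (brk X (S (bvec q.1 q.2))) (T (brk Y (bvec q.1 q.2))) =
      ∑ q ∈ pairs n, ip (brk X (T (bvec q.1 q.2))) (S (brk Y (bvec q.1 q.2))) := by
  have expand : ∀ S T : Module.End ℝ (so n),
      ∑ q ∈ pairs n, ip (brk X (S (bvec q.1 q.2))) (T (brk Y (bvec q.1 q.2))) =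
        ∑ q ∈ pairs n, ∑ v ∈ pairs n, ip (brk Y (bvec q.1 q.2)) (bvec v.1 v.2) *
          ip (brk X (S (bvec q.1 q.2))) (T (bvec v.1 v.2)) := fun S T =>
    Finset.sum_congr rfl fun q _ =>
      apply_eq_sum_ip_bvec_mul (ipL (brk X (S (bvec q.1 q.2))) ∘ₗ T) _
  rw [expand, expand, Finset.sum_comm]
  refine Finset.sum_congr rfl fun q _ => Finset.sum_congr rfl fun v _ => ?_
  rw [ip_brk_eq_neg_ip_brk Y, ip_brk_eq_neg_ip_brk X]
  ring

lemma _root_.LinearMap.trace_smulRight_mul {R M : Type*} [CommRing R] [AddCommGroup M]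
    [Module R M] [Module.Free R M] [Module.Finite R M] (f : M →ₗ[R] R) (v : M)
    (T : Module.End R M) :
    LinearMap.trace R M (f.smulRight v * T) = f (T v) :=
  LinearMap.trace_smulRight (f ∘ₗ T) v

def sharpPairing (R S T : Module.End ℝ (so n)) : ℝ :=
  ∑ p ∈ pairs n, ∑ q ∈ pairs n,
    ip (brk (R (bvec p.1 p.2)) (S (bvec q.1 q.2))) (T (brk (bvec p.1 p.2) (bvec q.1 q.2)))

lemma sharpPairing_comm₁₂ (R S T : Module.End ℝ (so n)) :
    sharpPairing R S T = sharpPairing S R T := by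
  rw [sharpPairing, Finset.sum_comm]
  refine Finset.sum_congr rfl fun p _ => Finset.sum_congr rfl fun q _ => ?_
  rw [brk_comm (R _), brk_comm (bvec _ _), map_neg, ip_neg_neg]

lemma sharpPairing_comm₂₃ (R S T : Module.End ℝ (so n)) :
    sharpPairing R S T = sharpPairing R T S :=
  Finset.sum_congr rfl fun _ _ => sum_ip_brk_apply_brk_comm _ _ S T

lemma trace_sharp_mul (R S : Module.End ℝ (so n)) {T : Module.End ℝ (so n)} (hT : selfAdjEnd T) :
    LinearMap.trace ℝ (so n) (sharp R S * T) = sharpPairing R S T / 2 := by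
  simp only [sharp, smul_mul_assoc, Finset.sum_mul, add_mul, map_smul, map_sum, map_add,
    LinearMap.trace_smulRight_mul, ipL, LinearMap.coe_mk, AddHom.coe_mk, smul_eq_mul]
  rw [sharpPairing, Finset.mul_sum, Finset.sum_div]
  refine Finset.sum_congr rfl fun p _ => ?_
  rw [Finset.mul_sum, Finset.sum_div]
  refine Finset.sum_congr rfl fun q _ => ?_
  rw [← hT (brk (bvec p.1 p.2) (bvec q.1 q.2)), ip_comm (T _)]
  ring

lemma tri_eq_trace_add_sharpPairing (R S : Module.End ℝ (so n)) {T : Module.End ℝ (so n)}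
    (hT : selfAdjEnd T) :
    tri R S T = LinearMap.trace ℝ (so n) (R * S * T) + LinearMap.trace ℝ (so n) (S * R * T) +
      sharpPairing R S T := by
  rw [tri, add_mul, add_mul, map_add, map_add, smul_mul_assoc, map_smul, trace_sharp_mul R S hT,
    smul_eq_mul]
  ring

lemma tri_comm₁₂ (R S : Module.End ℝ (so n)) {T : Module.End ℝ (so n)} (hT : selfAdjEnd T) :
    tri R S T = tri S R T := by
  rw [tri_eq_trace_add_sharpPairing R S hT, tri_eq_trace_add_sharpPairing S R hT,
    sharpPairing_comm₁₂]
  ring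

lemma tri_comm₂₃ (R : Module.End ℝ (so n)) {S T : Module.End ℝ (so n)} (hS : selfAdjEnd S)
    (hT : selfAdjEnd T) : tri R S T = tri R T S := by
  rw [tri_eq_trace_add_sharpPairing R S hT, tri_eq_trace_add_sharpPairing R T hS,
    sharpPairing_comm₂₃, LinearMap.trace_mul_cycle (f := R) (g := S),
    LinearMap.trace_mul_cycle (f := R) (g := T)]
  ring

theorem _root_.Function.apply_perm_fin_three {α β : Type*} (t : α → α → α → β)
    (h12 : ∀ a b c, t a b c = t b a c) (h23 : ∀ a b c, t a b c = t a c b) (v : Fin 3 → α)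
    (σ : Equiv.Perm (Fin 3)) : t (v (σ 0)) (v (σ 1)) (v (σ 2)) = t (v 0) (v 1) (v 2) := by
  have hσ : (σ 0, σ 1, σ 2) ∈ ({(0, 1, 2), (0, 2, 1), (1, 0, 2), (1, 2, 0), (2, 0, 1), (2, 1, 0)} :
      Finset (Fin 3 × Fin 3 × Fin 3)) := by
    revert σ; decide
  simp only [Finset.mem_insert, Finset.mem_singleton, Prod.mk.injEq] at hσ
  rcases hσ with ⟨h0, h1, h2⟩ | ⟨h0, h1, h2⟩ | ⟨h0, h1, h2⟩ | ⟨h0, h1, h2⟩ | ⟨h0, h1, h2⟩ |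
    ⟨h0, h1, h2⟩ <;> rw [h0, h1, h2]
  · exact h23 ..
  · exact h12 ..
  · exact (h23 ..).trans (h12 ..)
  · exact (h12 ..).trans (h23 ..)
  · exact ((h12 ..).trans (h23 ..)).trans (h12 ..)

theorem stmt_8_general {n : ℕ} (Rv : Fin 3 → Module.End ℝ (so n))
    (hRv : ∀ i, selfAdjEnd (Rv i)) (σ : Equiv.Perm (Fin 3)) :
    tri (Rv (σ 0)) (Rv (σ 1)) (Rv (σ 2)) = tri (Rv 0) (Rv 1) (Rv 2) :=
  Function.apply_perm_fin_three
    (fun R S T : {R : Module.End ℝ (so n) // selfAdjEnd R} => tri R.1 S.1 T.1)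
    (fun R S T => tri_comm₁₂ R.1 S.1 T.2) (fun R S T => tri_comm₂₃ R.1 S.2 T.2)
    (fun i => ⟨Rv i, hRv i⟩) σ

/-- The trilinear form `tri` is symmetric in all three arguments. -/
theorem stmt_8 {n : ℕ} (hn : 2 ≤ n) (Rv : Fin 3 → Module.End ℝ (so n))
    (hRv : ∀ i, selfAdjEnd (Rv i)) (σ : Equiv.Perm (Fin 3)) :
    tri (Rv (σ 0)) (Rv (σ 1)) (Rv (σ 2)) = tri (Rv 0) (Rv 1) (Rv 2) :=
  stmt_8_general Rv hRv σ

end BW
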